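/- Let Δ be a stable simplicial complex on [n], let 1 ≤ k < l ≤ n, and let σ_1,…,σ_r be the minimal nonfaces of Δ, so G(I_Δ) = {x_{σ_1},…,x_{σ_r}}. For i ∈ [r] define σ_i^* = σ_s ∪ τ if σ_i = S_{kl}(σ_s) ∪ τ for some s ≠ i with S_{kl}(σ_s) ∩ τ = ∅ and max σ_s < min τ, and σ_i^* = S_{kl}(σ_i) otherwise. Then the minimal monomial generating set of the Stanley–Reisner ideal of Shift_{kl}(Δ) is G(I_{Shift_{kl}(Δ)}) = {x_{σ_1^*}, x_{σ_2^*}, …, x_{σ_r^*}}, and m(σ_i^*) = m(σ_i) for i = 1,…,r. -/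

import Mathlib

open MvPolynomial

/-! ### Simplicial complexes and Stanley-Reisner ideals -/

/-- A simplicial complex on the vertex set `Fin n`: contains all singletons and is
closed under taking subsets. -/
def IsSimplicialComplex {n : ℕ} (Δ : Set (Finset (Fin n))) : Prop :=
  (∀ i : Fin n, {i} ∈ Δ) ∧ ∀ σ ∈ Δ, ∀ τ : Finset (Fin n), τ ⊆ σ → τ ∈ Δ

/-- The Stanley-Reisner ideal of `Δ` in `K[x_1,…,x_n]`, generated by the squarefree
monomials `x_σ` corresponding to nonfaces `σ ∉ Δ`. -/
noncomputable def srIdeal (K : Type) [Field K] {n : ℕ} (Δ : Set (Finset (Fin n))) :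
    Ideal (MvPolynomial (Fin n) K) :=
  Ideal.span { u | ∃ σ : Finset (Fin n), σ ∉ Δ ∧ u = ∏ i ∈ σ, X i }

/-- A minimal nonface of `Δ`: a nonface all of whose proper subsets are faces. -/
def IsMinNonface {n : ℕ} (Δ : Set (Finset (Fin n))) (σ : Finset (Fin n)) : Prop :=
  σ ∉ Δ ∧ ∀ τ : Finset (Fin n), τ ⊂ σ → τ ∈ Δ

/-! ### Monomial ideals, stability -/

/-- `I` is a monomial ideal: generated by monomials. -/
def IsMonomialIdeal (K : Type) [Field K] {ι : Type} (I : Ideal (MvPolynomial ι K)) : Prop :=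
  ∃ A : Set (ι →₀ ℕ), I = Ideal.span ((fun a => monomial a (1 : K)) '' A)

/-- A squarefree exponent vector. -/
def IsSqfreeExp {ι : Type} (a : ι →₀ ℕ) : Prop := ∀ i, a i ≤ 1

/-- `I` is a squarefree monomial ideal: generated by squarefree monomials. -/
def IsSqfreeMonomialIdeal (K : Type) [Field K] {ι : Type} (I : Ideal (MvPolynomial ι K)) : Prop :=
  ∃ A : Set (ι →₀ ℕ), (∀ a ∈ A, IsSqfreeExp a) ∧
    I = Ideal.span ((fun a => monomial a (1 : K)) '' A)

/-- The exponent of `x_i · (u / x_m)` where `u` has exponent `a`. -/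
noncomputable def exchExp {ι : Type} [DecidableEq ι] (a : ι →₀ ℕ) (i m : ι) : ι →₀ ℕ :=
  a + Finsupp.single i 1 - Finsupp.single m 1

/-- A monomial ideal `I` is stable: for every monomial `u ∈ I` and every `i < m(u)`
(where `m(u)` is the largest variable index occurring in `u`), `x_i·(u/x_{m(u)}) ∈ I`. -/
def IsStableIdeal (K : Type) [Field K] {ι : Type} [LinearOrder ι]
    (I : Ideal (MvPolynomial ι K)) : Prop :=
  IsMonomialIdeal K I ∧
    ∀ a : ι →₀ ℕ, monomial a (1 : K) ∈ I →
      ∀ m i : ι, m ∈ a.support → (∀ k ∈ a.support, k ≤ m) → i < m →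
        monomial (exchExp a i m) (1 : K) ∈ I

/-- A squarefree monomial ideal `I` is squarefree stable: for every squarefree monomial
`u ∈ I` and every `i < m(u)` with `x_i ∤ u`, `x_i·(u/x_{m(u)}) ∈ I`. -/
def IsSqfreeStableIdeal (K : Type) [Field K] {ι : Type} [LinearOrder ι]
    (I : Ideal (MvPolynomial ι K)) : Prop :=
  IsSqfreeMonomialIdeal K I ∧
    ∀ a : ι →₀ ℕ, IsSqfreeExp a → monomial a (1 : K) ∈ I →
      ∀ m i : ι, m ∈ a.support → (∀ k ∈ a.support, k ≤ m) → i < m → i ∉ a.support →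
        monomial (exchExp a i m) (1 : K) ∈ I

/-- The minimal system of monomial generators of a monomial ideal: the monomials of `I`
having no proper monomial divisor inside `I`. -/
def minGens (K : Type) [Field K] {ι : Type} (I : Ideal (MvPolynomial ι K)) :
    Set (MvPolynomial ι K) :=
  { u | ∃ a : ι →₀ ℕ, u = monomial a (1 : K) ∧ u ∈ I ∧
      ∀ b : ι →₀ ℕ, b ≤ a → b ≠ a → monomial b (1 : K) ∉ I }

/-- `m(u)`, 1-based: the largest index (in `{1,…,n}`) of a variable dividing the monomial
with exponent `a` (equals `0` if `a = 0`). -/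
def maxIdx {n : ℕ} (a : Fin n →₀ ℕ) : ℕ := a.support.sup (fun i => i.val + 1)

/-- The degree of the monomial with exponent `a`. -/
def degExp {ι : Type} (a : ι →₀ ℕ) : ℕ := a.sum fun _ e => e

/-- The ideal `I_{⟨j⟩}` generated by the degree-`j` component of `I`. -/
noncomputable def componentIdeal (K : Type) [Field K] {ι : Type} (I : Ideal (MvPolynomial ι K)) (j : ℕ) :
    Ideal (MvPolynomial ι K) :=
  Ideal.span { f | f ∈ I ∧ f.IsHomogeneous j }

/-- `I` is generated in degree `j`. -/
def GeneratedInDegree (K : Type) [Field K] {ι : Type} (I : Ideal (MvPolynomial ι K))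
    (j : ℕ) : Prop :=
  I = Ideal.span { f | f ∈ I ∧ f.IsHomogeneous j }

/-! ### The reverse lexicographic order and generic initial ideals -/

/-- `a` is smaller than `b` in the (degree) reverse lexicographic order induced by
`x_1 > x_2 > … > x_n`. -/
def rvlt {n : ℕ} (a b : Fin n →₀ ℕ) : Prop :=
  degExp a < degExp b ∨
    (degExp a = degExp b ∧ ∃ k : Fin n, b k < a k ∧ ∀ m : Fin n, k < m → a m = b m)

/-- `a` is the exponent of the leading monomial of `f` with respect to the reverse
lexicographic order. -/
def IsLeadExp {n : ℕ} {K : Type} [Field K] (f : MvPolynomial (Fin n) K) (a : Fin n →₀ ℕ) :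
    Prop :=
  a ∈ f.support ∧ ∀ b ∈ f.support, b = a ∨ rvlt b a

/-- The initial ideal of `I` with respect to the reverse lexicographic order: the ideal
generated by the leading monomials of the nonzero elements of `I`. -/
noncomputable def inIdeal {n : ℕ} (K : Type) [Field K] (I : Ideal (MvPolynomial (Fin n) K)) :
    Ideal (MvPolynomial (Fin n) K) :=
  Ideal.span { u | ∃ f ∈ I, f ≠ 0 ∧ ∃ a : Fin n →₀ ℕ, IsLeadExp f a ∧ u = monomial a (1 : K) }

/-- The linear change of coordinates `x_i ↦ ∑_j g_{ij} x_j` on `K[x_1,…,x_n]`. -/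
noncomputable def changeOfVars (K : Type) [Field K] {n : ℕ} (g : Matrix (Fin n) (Fin n) K) :
    MvPolynomial (Fin n) K →ₐ[K] MvPolynomial (Fin n) K :=
  aeval (fun i => ∑ j, C (g i j) * X j)

/-- `J` is the generic initial ideal of `I` with respect to the reverse lexicographic
order: there is a nonempty Zariski-open subset `U` of `GL_n(K)` (the nonvanishing locus
of a nonzero polynomial `p` in the matrix entries) such that `in(g·I) = J` for all
`g ∈ U`. -/
def IsGin {n : ℕ} (K : Type) [Field K] (I J : Ideal (MvPolynomial (Fin n) K)) : Prop :=
  ∃ p : MvPolynomial (Fin n × Fin n) K, p ≠ 0 ∧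
    ∀ g : Matrix (Fin n) (Fin n) K, IsUnit g.det →
      eval (fun q : Fin n × Fin n => g q.1 q.2) p ≠ 0 →
        inIdeal K (Ideal.map (changeOfVars K g) I) = J

/-- `I` is Borel-fixed: fixed by every invertible linear change of coordinates sending
each variable into the span of the variables with smaller or equal index (the Borel
group of upper triangular matrices). -/
def IsBorelFixed {n : ℕ} (K : Type) [Field K] (I : Ideal (MvPolynomial (Fin n) K)) : Prop :=
  ∀ g : Matrix (Fin n) (Fin n) K, IsUnit g.det → (∀ i j : Fin n, i < j → g i j = 0) →
    Ideal.map (changeOfVars K g) I = I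

/-! ### Graded Betti numbers via the Koszul complex

For a graded ideal `I ⊆ S = K[x_1,…,x_n]`, the graded Betti number satisfies
`β_{i,j}(I) = dim_K Tor_i^S(I, K)_j`, which is computed as the degree-`j` strand of the
homology of the Koszul complex `K(x_1,…,x_n; S) ⊗_S I`. -/

/-- The degree-`d` homogeneous component of `I`, as a `K`-subspace. -/
noncomputable def degPiece {n : ℕ} (K : Type) [Field K] (I : Ideal (MvPolynomial (Fin n) K))
    (d : ℤ) : Submodule K (MvPolynomial (Fin n) K) :=
  if 0 ≤ d then
    (Submodule.restrictScalars K (I : Submodule (MvPolynomial (Fin n) K) (MvPolynomial (Fin n) K)))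
      ⊓ homogeneousSubmodule (Fin n) K d.toNat
  else ⊥

/-- The Koszul differential on `⋀ S^n ⊗ S`, with basis components indexed by subsets of
variables: `(D f)(t) = ∑_{a ∉ t} (-1)^{|{b ∈ t : b < a}|} x_a · f(t ∪ {a})`. -/
noncomputable def koszulD (n : ℕ) (K : Type) [Field K] :
    (Finset (Fin n) → MvPolynomial (Fin n) K) →ₗ[K] (Finset (Fin n) → MvPolynomial (Fin n) K) where
  toFun f t := ∑ a : Fin n, if a ∈ t then 0 else
    ((-1 : K) ^ (t.filter (fun b => b < a)).card) • (X a * f (insert a t))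
  map_add' f g := by
    funext t
    rw [Pi.add_apply, ← Finset.sum_add_distrib]
    refine Finset.sum_congr rfl fun a _ => ?_
    by_cases h : a ∈ t <;> simp [h, mul_add, smul_add]
  map_smul' c f := by
    funext t
    simp only [RingHom.id_apply, Pi.smul_apply, Finset.smul_sum]
    refine Finset.sum_congr rfl fun a _ => ?_
    by_cases h : a ∈ t <;> simp [h, mul_smul_comm, smul_comm c]

/-- The degree-`j` strand of homological degree `i` of the Koszul complex tensored with
`I`: functions supported on `i`-element subsets `s`, with values in the homogeneous
component `I_{j-i}` (the basis element `e_s` has internal degree `i`). -/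
noncomputable def koszulStrand {n : ℕ} (K : Type) [Field K]
    (I : Ideal (MvPolynomial (Fin n) K)) (i j : ℕ) :
    Submodule K (Finset (Fin n) → MvPolynomial (Fin n) K) :=
  Submodule.pi Set.univ
    (fun s : Finset (Fin n) => if s.card = i then degPiece K I ((j : ℤ) - (i : ℤ)) else ⊥)

/-- The graded Betti number `β_{i,j}(I) = dim_K Tor_i^S(I,K)_j`, computed as the dimension
of the degree-`j` strand of the `i`-th Koszul homology of `I`:
`dim (ker D ∩ strand_{i,j}) − dim D(strand_{i+1,j})`. -/
noncomputable def betti {n : ℕ} (K : Type) [Field K] (I : Ideal (MvPolynomial (Fin n) K))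
    (i j : ℕ) : ℕ :=
  Module.finrank K ↥(LinearMap.ker (koszulD n K) ⊓ koszulStrand K I i j) -
    Module.finrank K ↥(Submodule.map (koszulD n K) (koszulStrand K I (i + 1) j))

/-! ### The squarefree operator `σ` -/

/-- The support of `u^σ`: if `u = x_{i_1}⋯x_{i_d}` with `i_1 ≤ … ≤ i_d` (0-based indices),
then `u^σ = x_{i_1}x_{i_2+1}⋯x_{i_d+(d-1)}`, a squarefree monomial in variables indexed
by `ℕ`. -/
noncomputable def sigmaSupport {n : ℕ} (a : Fin n →₀ ℕ) : Finset ℕ :=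
  (((Finsupp.toMultiset a).sort (· ≤ ·)).zipIdx.map (fun p => p.1.val + p.2)).toFinset

/-- The squarefree monomial `u^σ`, in the polynomial ring `K[x_0,x_1,…]` with variables
indexed by `ℕ`. -/
noncomputable def sigmaMonomialNat (K : Type) [Field K] {n : ℕ} (a : Fin n →₀ ℕ) :
    MvPolynomial ℕ K :=
  ∏ t ∈ sigmaSupport a, X t

/-- The squarefree monomial `u^σ`, viewed in `K[x_1,…,x_N]` (meaningful when `u^σ`
involves only the first `N` variables). -/
noncomputable def sigmaMonomialFin (K : Type) [Field K] {n : ℕ} (N : ℕ) (a : Fin n →₀ ℕ) :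
    MvPolynomial (Fin N) K :=
  ∏ t ∈ sigmaSupport a, if h : t < N then X (⟨t, h⟩ : Fin N) else 1

/-- The ideal `I^σ` generated by the squarefree monomials `u^σ`, `u ∈ G(I)`, in the
polynomial ring with variables indexed by `ℕ`. -/
noncomputable def sigmaIdealNat (K : Type) [Field K] {n : ℕ}
    (I : Ideal (MvPolynomial (Fin n) K)) : Ideal (MvPolynomial ℕ K) :=
  Ideal.span { u | ∃ a : Fin n →₀ ℕ, monomial a (1 : K) ∈ minGens K I ∧ u = sigmaMonomialNat K a }

/-- The variable `x_{k-m}` (with truncated subtraction of indices). -/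
def shiftVar {n : ℕ} (k : Fin n) (m : ℕ) : Fin n :=
  ⟨k.val - m, lt_of_le_of_lt (Nat.sub_le _ _) k.isLt⟩

/-! ### Combinatorial shifting -/

open Classical in
/-- The combinatorial shifting operation `S_{kl}` on nonfaces. -/
noncomputable def Skl {n : ℕ} (Δ : Set (Finset (Fin n))) (k l : Fin n) (σ : Finset (Fin n)) :
    Finset (Fin n) :=
  if l ∈ σ ∧ k ∉ σ ∧ insert k (σ.erase l) ∈ Δ then insert k (σ.erase l) else σ

/-- `Shift_{kl}(Δ)`: the simplicial complex whose nonfaces are the supersets of the sets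
`S_{kl}(σ)`, `σ ∉ Δ`; its Stanley–Reisner ideal is generated by the `x_{S_{kl}(σ)}`. -/
noncomputable def ShiftKl {n : ℕ} (Δ : Set (Finset (Fin n))) (k l : Fin n) :
    Set (Finset (Fin n)) :=
  { τ | ¬ ∃ σ : Finset (Fin n), σ ∉ Δ ∧ Skl Δ k l σ ⊆ τ }

/-- The stability condition for a simplicial complex: for every nonface `σ` and every
`i < m(σ)` with `i ∉ σ`, `(σ∖{m(σ)})∪{i}` is again a nonface. -/
def IsStableComplex {n : ℕ} (Δ : Set (Finset (Fin n))) : Prop :=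
  IsSimplicialComplex Δ ∧
    ∀ σ : Finset (Fin n), σ ∉ Δ → ∀ m i : Fin n, m ∈ σ → (∀ k ∈ σ, k ≤ m) → i < m → i ∉ σ →
      insert i (σ.erase m) ∉ Δ

/-- A shifted simplicial complex. -/
def IsShifted {n : ℕ} (Δ : Set (Finset (Fin n))) : Prop :=
  IsSimplicialComplex Δ ∧
    ∀ σ ∈ Δ, ∀ j ∈ σ, ∀ i : Fin n, i < j → i ∉ σ → insert i (σ.erase j) ∈ Δ

/-- `Δc` is a combinatorial shifted complex of `Δ`: a shifted complex obtained from `Δ`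
by finitely many (at least one) operations `Shift_{kl}`. -/
noncomputable def IsCombShifted {n : ℕ} (Δ Δc : Set (Finset (Fin n))) : Prop :=
  IsShifted Δc ∧ ∃ L : List (Fin n × Fin n), L ≠ [] ∧ (∀ p ∈ L, p.1 < p.2) ∧
    Δc = L.foldl (fun D p => ShiftKl D p.1 p.2) Δ

/-- `σ*`, as a relation: `σ* = σ_s ∪ τ` if `σ = S_{kl}(σ_s) ∪ τ` for some minimal nonface
`σ_s ≠ σ` with `S_{kl}(σ_s) ∩ τ = ∅` and `σ_s < τ`, and `σ* = S_{kl}(σ)` otherwise. -/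
def IsStar {n : ℕ} (Δ : Set (Finset (Fin n))) (k l : Fin n) (σ σstar : Finset (Fin n)) :
    Prop :=
  (∃ σs τ : Finset (Fin n), IsMinNonface Δ σs ∧ σs ≠ σ ∧ σ = Skl Δ k l σs ∪ τ ∧
      Disjoint (Skl Δ k l σs) τ ∧ (∀ a ∈ σs, ∀ b ∈ τ, a < b) ∧ σstar = σs ∪ τ) ∨
  ((¬ ∃ σs τ : Finset (Fin n), IsMinNonface Δ σs ∧ σs ≠ σ ∧ σ = Skl Δ k l σs ∪ τ ∧
      Disjoint (Skl Δ k l σs) τ ∧ (∀ a ∈ σs, ∀ b ∈ τ, a < b)) ∧ σstar = Skl Δ k l σ)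

/-! ### Exterior algebra: exterior face ideals and exterior generic initial ideals -/

/-- The exterior monomial `e_σ = e_{i_1} ∧ ⋯ ∧ e_{i_r}` for `σ = {i_1 < … < i_r}`, in the
exterior algebra on `K^n`. -/
noncomputable def eMon (K : Type) [Field K] {n : ℕ} (σ : Finset (Fin n)) :
    ExteriorAlgebra K (Fin n → K) :=
  ((σ.sort (· ≤ ·)).map (fun i => ExteriorAlgebra.ι K (Pi.single i (1 : K)))).prod

/-- The exterior Stanley–Reisner ideal `J_Δ ⊆ E = ⋀(K^n)`, generated by the `e_σ` for
nonfaces `σ`. -/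
noncomputable def extIdeal (K : Type) [Field K] {n : ℕ} (Δ : Set (Finset (Fin n))) :
    Ideal (ExteriorAlgebra K (Fin n → K)) :=
  Ideal.span { u | ∃ σ : Finset (Fin n), σ ∉ Δ ∧ u = eMon K σ }

/-- The reverse lexicographic order on squarefree (exterior) monomials. -/
def rvltF {n : ℕ} (s t : Finset (Fin n)) : Prop :=
  s.card < t.card ∨
    (s.card = t.card ∧ ∃ k : Fin n, k ∈ s ∧ k ∉ t ∧ ∀ m : Fin n, k < m → (m ∈ s ↔ m ∈ t))

/-- `e_σ` is the leading (exterior) monomial of `f ∈ E` with respect to the reverse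
lexicographic order: `f` lies in the span of the monomials `≤ e_σ` but not in the span of
the monomials `< e_σ`. -/
def IsLeadMonE (K : Type) [Field K] {n : ℕ} (f : ExteriorAlgebra K (Fin n → K))
    (σ : Finset (Fin n)) : Prop :=
  f ∈ Submodule.span K (eMon K '' { τ | τ = σ ∨ rvltF τ σ }) ∧
    f ∉ Submodule.span K (eMon K '' { τ | rvltF τ σ })

/-- The initial ideal of an ideal `J ⊆ E` with respect to the reverse lexicographic
order. -/
noncomputable def inIdealE (K : Type) [Field K] {n : ℕ}
    (J : Ideal (ExteriorAlgebra K (Fin n → K))) : Ideal (ExteriorAlgebra K (Fin n → K)) :=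
  Ideal.span { u | ∃ f ∈ J, ∃ σ : Finset (Fin n), IsLeadMonE K f σ ∧ u = eMon K σ }

/-- The algebra endomorphism of `E` induced by the linear map `g : K^n → K^n`. -/
noncomputable def emap (K : Type) [Field K] {n : ℕ} (g : Matrix (Fin n) (Fin n) K) :
    ExteriorAlgebra K (Fin n → K) →ₐ[K] ExteriorAlgebra K (Fin n → K) :=
  ExteriorAlgebra.lift K
    ⟨(ExteriorAlgebra.ι K).comp g.mulVecLin, fun _ => ExteriorAlgebra.ι_sq_zero _⟩

/-- `J'` is the generic initial ideal of `J` in the exterior algebra `E`, with respect to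
the reverse lexicographic order. -/
def IsGinE (K : Type) [Field K] {n : ℕ} (J J' : Ideal (ExteriorAlgebra K (Fin n → K))) :
    Prop :=
  ∃ p : MvPolynomial (Fin n × Fin n) K, p ≠ 0 ∧
    ∀ g : Matrix (Fin n) (Fin n) K, IsUnit g.det →
      eval (fun q : Fin n × Fin n => g q.1 q.2) p ≠ 0 →
        inIdealE K (Ideal.map (emap K g) J) = J'

open MvPolynomial Finset

namespace StarAux

variable {n : ℕ}

/-- exponent vector of a squarefree monomial -/
noncomputable def expOf (σ : Finset (Fin n)) : Fin n →₀ ℕ := ∑ i ∈ σ, Finsupp.single i 1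

lemma expOf_apply (σ : Finset (Fin n)) (j : Fin n) :
    expOf σ j = if j ∈ σ then 1 else 0 := by
  classical
  have h : expOf σ j = ∑ i ∈ σ, (Finsupp.single i 1 : Fin n →₀ ℕ) j :=
    map_sum (Finsupp.applyAddHom j) _ σ
  rw [h]
  simp only [Finsupp.single_apply]
  rw [Finset.sum_ite_eq' σ j (fun _ => 1)]

lemma expOf_le_iff {σ τ : Finset (Fin n)} : expOf σ ≤ expOf τ ↔ σ ⊆ τ := by
  constructor
  · intro h i hi
    have := Finsupp.le_def.mp h i
    rw [expOf_apply, expOf_apply, if_pos hi] at this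
    by_contra hiτ
    rw [if_neg hiτ] at this
    omega
  · intro h
    rw [Finsupp.le_def]
    intro i
    rw [expOf_apply, expOf_apply]
    by_cases hi : i ∈ σ
    · rw [if_pos hi, if_pos (h hi)]
    · rw [if_neg hi]; exact Nat.zero_le _
lemma expOf_inj {σ τ : Finset (Fin n)} (h : expOf σ = expOf τ) : σ = τ :=
  Finset.Subset.antisymm (expOf_le_iff.mp h.le) (expOf_le_iff.mp h.ge)

variable (K : Type) [Field K]

lemma prod_X_eq (σ : Finset (Fin n)) :
    (∏ i ∈ σ, X i : MvPolynomial (Fin n) K) = monomial (expOf σ) 1 := by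
  rw [expOf, monomial_sum_one]
  rfl

lemma srIdeal_eq (Δ' : Set (Finset (Fin n))) :
    srIdeal K Δ' = Ideal.span ((fun a => monomial a (1 : K)) '' (expOf '' {σ | σ ∉ Δ'})) := by
  unfold srIdeal
  congr 1
  ext u
  simp only [Set.mem_setOf_eq, Set.mem_image]
  constructor
  · rintro ⟨σ, hσ, rfl⟩
    exact ⟨expOf σ, ⟨σ, hσ, rfl⟩, (prod_X_eq K σ).symm⟩
  · rintro ⟨a, ⟨σ, hσ, rfl⟩, rfl⟩
    exact ⟨σ, hσ, (prod_X_eq K σ).symm⟩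

lemma mono_mem_iff {Δ' : Set (Finset (Fin n))} {b : Fin n →₀ ℕ} :
    monomial b (1 : K) ∈ srIdeal K Δ' ↔ ∃ σ, σ ∉ Δ' ∧ expOf σ ≤ b := by
  classical
  rw [srIdeal_eq, mem_ideal_span_monomial_image]
  rw [support_monomial, if_neg (one_ne_zero : (1:K) ≠ 0)]
  constructor
  · intro h
    obtain ⟨si, ⟨σ, hσ, rfl⟩, hle⟩ := h b (Finset.mem_singleton_self b)
    exact ⟨σ, hσ, hle⟩
  · rintro ⟨σ, hσ, hle⟩ xi hxi
    rw [Finset.mem_singleton] at hxi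
    subst hxi
    exact ⟨expOf σ, ⟨σ, hσ, rfl⟩, hle⟩

lemma minGens_char (Δ' : Set (Finset (Fin n))) :
    minGens K (srIdeal K Δ') =
      {u | ∃ T, T ∉ Δ' ∧ (∀ T' ⊆ T, T' ∉ Δ' → T' = T) ∧ u = monomial (expOf T) (1 : K)} := by
  ext u
  constructor
  · rintro ⟨a, rfl, haI, hmin⟩
    obtain ⟨T0, hT0, hle⟩ := (mono_mem_iff K).mp haI
    have ha : expOf T0 = a := by
      by_contra hne
      exact hmin (expOf T0) hle hne ((mono_mem_iff K).mpr ⟨T0, hT0, le_rfl⟩)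
    refine ⟨T0, hT0, ?_, by rw [ha]⟩
    intro T' hsub hT'
    by_contra hne
    refine hmin (expOf T') (ha ▸ expOf_le_iff.mpr hsub) ?_ ((mono_mem_iff K).mpr ⟨T', hT', le_rfl⟩)
    rw [← ha]
    exact fun h => hne (expOf_inj h)
  · rintro ⟨T, hT, hmin, rfl⟩
    refine ⟨expOf T, rfl, (mono_mem_iff K).mpr ⟨T, hT, le_rfl⟩, ?_⟩
    intro b hb hne hbI
    obtain ⟨T'', hT'', hle⟩ := (mono_mem_iff K).mp hbI
    have h1 : T'' = T := hmin T'' (expOf_le_iff.mp (hle.trans hb)) hT''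
    exact hne (le_antisymm hb (h1 ▸ hle))

section Comb

variable {n : ℕ} {Δ : Set (Finset (Fin n))} {k l : Fin n}

lemma hup (hst : IsStableComplex Δ) {A B : Finset (Fin n)} (hA : A ∉ Δ) (hAB : A ⊆ B) :
    B ∉ Δ := fun hB => hA (hst.1.2 B hB A hAB)

lemma hdown (hst : IsStableComplex Δ) {A B : Finset (Fin n)} (hA : A ∈ Δ) (hBA : B ⊆ A) :
    B ∈ Δ := hst.1.2 A hA B hBA

lemma nonempty_of_nonface (hst : IsStableComplex Δ) {A : Finset (Fin n)} (hA : A ∉ Δ)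
    (i : Fin n) : A.Nonempty := by
  rcases A.eq_empty_or_nonempty with rfl | h
  · exact absurd (hdown hst (hst.1.1 i) (Finset.empty_subset _)) hA
  · exact h

lemma exists_min (hst : IsStableComplex Δ) :
    ∀ A : Finset (Fin n), A ∉ Δ → ∃ σ, σ ⊆ A ∧ IsMinNonface Δ σ := by
  intro A
  induction A using Finset.strongInduction with
  | _ A ih =>
    intro hA
    by_cases h : ∀ τ : Finset (Fin n), τ ⊂ A → τ ∈ Δ
    · exact ⟨A, Finset.Subset.refl A, hA, h⟩
    · push_neg at h
      obtain ⟨τ, h1, h2⟩ := h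
      obtain ⟨σ, hs1, hs2⟩ := ih τ h1 h2
      exact ⟨σ, hs1.trans h1.subset, hs2⟩

lemma min_face {σ τ : Finset (Fin n)} (hσ : IsMinNonface Δ σ) (hsub : τ ⊆ σ) (hne : τ ≠ σ) :
    τ ∈ Δ := hσ.2 τ (Finset.ssubset_iff_subset_ne.mpr ⟨hsub, hne⟩)

lemma Skl_pos {σ : Finset (Fin n)} (h1 : l ∈ σ) (h2 : k ∉ σ)
    (h3 : insert k (σ.erase l) ∈ Δ) : Skl Δ k l σ = insert k (σ.erase l) := by
  unfold Skl; exact if_pos ⟨h1, h2, h3⟩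

lemma Skl_neg {σ : Finset (Fin n)} (h : ¬(l ∈ σ ∧ k ∉ σ ∧ insert k (σ.erase l) ∈ Δ)) :
    Skl Δ k l σ = σ := by
  unfold Skl; exact if_neg h

lemma Skl_cases (σ : Finset (Fin n)) :
    (¬(l ∈ σ ∧ k ∉ σ ∧ insert k (σ.erase l) ∈ Δ) ∧ Skl Δ k l σ = σ) ∨
      (l ∈ σ ∧ k ∉ σ ∧ insert k (σ.erase l) ∈ Δ ∧ Skl Δ k l σ = insert k (σ.erase l)) := by
  by_cases h : l ∈ σ ∧ k ∉ σ ∧ insert k (σ.erase l) ∈ Δ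
  · exact Or.inr ⟨h.1, h.2.1, h.2.2, Skl_pos h.1 h.2.1 h.2.2⟩
  · exact Or.inl ⟨h, Skl_neg h⟩

lemma no_shift_top (hst : IsStableComplex Δ) (hkl : k < l) {σ : Finset (Fin n)}
    (hσ : σ ∉ Δ) (hl : l ∈ σ) (hk : k ∉ σ) (hall : ∀ j ∈ σ, j ≤ l) :
    insert k (σ.erase l) ∉ Δ := hst.2 σ hσ l k hl hall hkl hk

lemma shift_big (hst : IsStableComplex Δ) (hkl : k < l) {σ : Finset (Fin n)}
    (hσ : σ ∉ Δ) (h1 : l ∈ σ) (h2 : k ∉ σ) (h3 : insert k (σ.erase l) ∈ Δ) :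
    ∃ m ∈ σ, l < m := by
  by_contra h
  push_neg at h
  exact no_shift_top hst hkl hσ h1 h2 (fun j hj => h j hj) h3

/-- the measure: sup of values -/
def msr (ν : Finset (Fin n)) : ℕ := ν.sup (fun x => (x : ℕ))

lemma msr_mono {ν ν' : Finset (Fin n)} (h : ν ⊆ ν') : msr ν ≤ msr ν' :=
  Finset.sup_mono h

lemma exists_top {ν : Finset (Fin n)} (hν : ν.Nonempty) :
    ∃ m ∈ ν, (∀ j ∈ ν, j ≤ m) ∧ (m : ℕ) = msr ν := by
  obtain ⟨m, hm, he⟩ := Finset.exists_mem_eq_sup ν hν (fun x : Fin n => (x : ℕ))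
  refine ⟨m, hm, fun j hj => ?_, he.symm⟩
  have h1 : (j : ℕ) ≤ ν.sup (fun x : Fin n => (x : ℕ)) := Finset.le_sup hj
  rw [he] at h1
  exact h1

lemma exists_min_measure (P : Finset (Fin n) → Prop) (h : ∃ ν, P ν) :
    ∃ ν, P ν ∧ ∀ ν', P ν' → msr ν ≤ msr ν' := by
  classical
  obtain ⟨ν0, hν0⟩ := h
  have hS : ((fun ν : Finset (Fin n) => msr ν) '' {ν | P ν}).Nonempty :=
    ⟨msr ν0, Set.mem_image_of_mem _ hν0⟩
  obtain ⟨ν, hν, hrfl⟩ := Nat.sInf_mem hS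
  exact ⟨ν, hν, fun ν' hν' =>
    le_trans (le_of_eq hrfl) (Nat.sInf_le (Set.mem_image_of_mem _ hν'))⟩

lemma decomp_shift (hst : IsStableComplex Δ) {σ σs τ : Finset (Fin n)}
    (hσ : IsMinNonface Δ σ) (hσs : IsMinNonface Δ σs) (hne : σs ≠ σ)
    (hd : σ = Skl Δ k l σs ∪ τ) :
    l ∈ σs ∧ k ∉ σs ∧ insert k (σs.erase l) ∈ Δ ∧ Skl Δ k l σs = insert k (σs.erase l) := by
  rcases Skl_cases (Δ := Δ) (k := k) (l := l) σs with ⟨_, h⟩ | h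
  · exfalso
    rw [h] at hd
    have hsub : σs ⊆ σ := by rw [hd]; exact Finset.subset_union_left
    exact hσs.1 (min_face hσ hsub hne)
  · exact ⟨h.1, h.2.1, h.2.2.1, h.2.2.2⟩

lemma decomp_k_mem (hst : IsStableComplex Δ) {μ : Finset (Fin n)} (hμ : IsMinNonface Δ μ)
    (h : ∃ σs τ' : Finset (Fin n), IsMinNonface Δ σs ∧ σs ≠ μ ∧ μ = Skl Δ k l σs ∪ τ' ∧
      Disjoint (Skl Δ k l σs) τ' ∧ ∀ a ∈ σs, ∀ b ∈ τ', a < b) : k ∈ μ := by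
  obtain ⟨σs, τ', c1, c2, c3, _, _⟩ := h
  obtain ⟨_, _, _, d4⟩ := decomp_shift hst hμ c1 c2 c3
  rw [c3]
  exact Finset.mem_union_left _ (by rw [d4]; exact Finset.mem_insert_self _ _)

lemma star_mem_F (hst : IsStableComplex Δ) (hkl : k < l) {σ T : Finset (Fin n)}
    (hσ : IsMinNonface Δ σ) (hstar : IsStar Δ k l σ T) :
    ∃ A, A ∉ Δ ∧ Skl Δ k l A ⊆ T := by
  rcases hstar with ⟨σs, τ, hσs, hne, hd, hdisj, htail, rfl⟩ | ⟨_, rfl⟩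
  · obtain ⟨hl, hk, hc, hSkl⟩ := decomp_shift hst hσ hσs hne hd
    refine ⟨σs ∪ τ, hup hst hσs.1 Finset.subset_union_left, ?_⟩
    have hτl : l ∉ τ := fun hlτ => lt_irrefl l (htail l hl l hlτ)
    have key : insert k ((σs ∪ τ).erase l) = σ := by
      rw [hd, hSkl, Finset.erase_union_distrib, Finset.erase_eq_of_notMem hτl,
        Finset.insert_union]
    have hs : Skl Δ k l (σs ∪ τ) = σs ∪ τ := Skl_neg (fun hcond => hσ.1 (key ▸ hcond.2.2))
    rw [hs]
  · exact ⟨σ, hσ.1, Finset.Subset.refl _⟩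

lemma typeA_hard (hst : IsStableComplex Δ) (hkl : k < l) {σ μ : Finset (Fin n)}
    (hσ : IsMinNonface Δ σ)
    (hnd : ¬∃ σs τ : Finset (Fin n), IsMinNonface Δ σs ∧ σs ≠ σ ∧ σ = Skl Δ k l σs ∪ τ ∧
      Disjoint (Skl Δ k l σs) τ ∧ ∀ a ∈ σs, ∀ b ∈ τ, a < b)
    (hμ : IsMinNonface Δ μ) (h1 : l ∈ μ) (h2 : k ∉ μ)
    (hsub : insert k (μ.erase l) ⊆ σ) (hne : insert k (μ.erase l) ≠ σ) : False := by
  have hkσ : k ∈ σ := hsub (Finset.mem_insert_self k _)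
  have hlσ : l ∉ σ := by
    intro hl
    apply hμ.1
    apply hdown hst (min_face hσ (Finset.erase_subset k σ)
      (fun h => (Finset.erase_eq_self.mp h) hkσ))
    intro x hx
    by_cases hxl : x = l
    · exact Finset.mem_erase.mpr ⟨by rw [hxl]; exact (ne_of_lt hkl).symm, hxl ▸ hl⟩
    · have hx' : x ∈ insert k (μ.erase l) :=
        Finset.mem_insert_of_mem (Finset.mem_erase.mpr ⟨hxl, hx⟩)
      refine Finset.mem_erase.mpr ⟨fun e => h2 (e ▸ hx), hsub hx'⟩
  obtain ⟨ν, hP, hminν⟩ := exists_min_measure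
    (fun ν => IsMinNonface Δ ν ∧ l ∈ ν ∧ k ∉ ν ∧ insert k (ν.erase l) ⊆ σ ∧
      insert k (ν.erase l) ≠ σ) ⟨μ, hμ, h1, h2, hsub, hne⟩
  obtain ⟨hνmin, hlν, hkν, hcsub, hcne⟩ := hP
  have hcΔ : insert k (ν.erase l) ∈ Δ := min_face hσ hcsub hcne
  obtain ⟨mh, hmhν, hall, hmhmsr⟩ := exists_top (⟨l, hlν⟩ : ν.Nonempty)
  have hlm : l < mh := by
    rcases lt_or_eq_of_le (hall l hlν) with h | h
    · exact h
    · exact absurd hcΔ (no_shift_top hst hkl hνmin.1 hlν hkν (fun j hj => h ▸ hall j hj))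
  have hmhσ : mh ∈ σ :=
    hcsub (Finset.mem_insert_of_mem (Finset.mem_erase.mpr ⟨ne_of_gt hlm, hmhν⟩))
  by_cases hz : ∃ z ∈ σ, z ∉ insert k (ν.erase l) ∧ z < mh
  · obtain ⟨z, hzσ, hzc, hzm⟩ := hz
    have hzν : z ∉ ν := by
      intro h
      have hzl : z ≠ l := fun e => hlσ (e ▸ hzσ)
      exact hzc (Finset.mem_insert_of_mem (Finset.mem_erase.mpr ⟨hzl, h⟩))
    have hν1 : insert z (ν.erase mh) ∉ Δ := hst.2 ν hνmin.1 mh z hmhν hall hzm hzν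
    obtain ⟨ν2, hsub2, hν2⟩ := exists_min hst _ hν1
    have hν1l : (insert z (ν.erase mh)).erase l ⊆ σ.erase mh := by
      intro x hx
      obtain ⟨hxl, hxi⟩ := Finset.mem_erase.mp hx
      rcases Finset.mem_insert.mp hxi with rfl | hxν
      · exact Finset.mem_erase.mpr ⟨ne_of_lt hzm, hzσ⟩
      · obtain ⟨hxm, hxν'⟩ := Finset.mem_erase.mp hxν
        exact Finset.mem_erase.mpr
          ⟨hxm, hcsub (Finset.mem_insert_of_mem (Finset.mem_erase.mpr ⟨hxl, hxν'⟩))⟩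
    have hfaceσm : σ.erase mh ∈ Δ := min_face hσ (Finset.erase_subset _ _)
      (fun h => (Finset.erase_eq_self.mp h) hmhσ)
    have hlν2 : l ∈ ν2 := by
      by_contra hl2
      exact hν2.1 (hdown hst hfaceσm ((Finset.subset_erase.mpr ⟨hsub2, hl2⟩).trans hν1l))
    have hkν2 : k ∉ ν2 := by
      intro hk2
      rcases Finset.mem_insert.mp (hsub2 hk2) with h | h
      · exact hzc (h ▸ Finset.mem_insert_self k _)
      · exact hkν (Finset.mem_of_mem_erase h)
    have hcsub2 : insert k (ν2.erase l) ⊆ σ := by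
      intro x hx
      rcases Finset.mem_insert.mp hx with rfl | hx
      · exact hkσ
      · obtain ⟨hxl, hx2⟩ := Finset.mem_erase.mp hx
        exact Finset.mem_of_mem_erase (hν1l (Finset.mem_erase.mpr ⟨hxl, hsub2 hx2⟩))
    have hcne2 : insert k (ν2.erase l) ≠ σ := by
      intro h
      have hm2 : mh ∈ insert k (ν2.erase l) := h ▸ hmhσ
      rcases Finset.mem_insert.mp hm2 with h' | h'
      · exact (ne_of_lt (hkl.trans hlm)) h'.symm
      · have hm12 : mh ∈ insert z (ν.erase mh) := hsub2 (Finset.mem_of_mem_erase h')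
        rcases Finset.mem_insert.mp hm12 with h'' | h''
        · exact (ne_of_lt hzm) h''.symm
        · exact (Finset.notMem_erase mh ν) h''
    have hms : msr ν2 < msr ν := by
      have hA1 : msr ν2 ≤ msr (insert z (ν.erase mh)) := msr_mono hsub2
      have hpos : (0 : ℕ) < (mh : ℕ) := lt_of_le_of_lt (Nat.zero_le _) hzm
      have hA2 : msr (insert z (ν.erase mh)) < (mh : ℕ) := by
        apply (Finset.sup_lt_iff hpos).mpr
        intro x hx
        rcases Finset.mem_insert.mp hx with rfl | hx
        · exact hzm
        · obtain ⟨hxm, hxν⟩ := Finset.mem_erase.mp hx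
          exact lt_of_le_of_ne (hall x hxν) (fun e => hxm (Fin.ext e))
      omega
    exact absurd (hminν ν2 ⟨hν2, hlν2, hkν2, hcsub2, hcne2⟩) (not_le.mpr hms)
  · push_neg at hz
    apply hnd
    refine ⟨ν, σ \ insert k (ν.erase l), hνmin, fun h => hlσ (h ▸ hlν), ?_, ?_, ?_⟩
    · rw [Skl_pos hlν hkν hcΔ]
      exact (Finset.union_sdiff_of_subset hcsub).symm
    · rw [Skl_pos hlν hkν hcΔ]
      exact Finset.disjoint_sdiff
    · intro a ha b hb
      obtain ⟨hbσ, hbc⟩ := Finset.mem_sdiff.mp hb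
      have hab : a ≠ b := by
        rintro rfl
        by_cases hal : a = l
        · exact hlσ (hal ▸ hbσ)
        · exact hbc (Finset.mem_insert_of_mem (Finset.mem_erase.mpr ⟨hal, ha⟩))
      exact lt_of_le_of_ne ((hall a ha).trans (hz b hbσ hbc)) hab

lemma shifted_sub (hst : IsStableComplex Δ) {A : Finset (Fin n)} (hA : A ∉ Δ)
    (h1 : l ∈ A) (h2 : k ∉ A) (h3 : insert k (A.erase l) ∈ Δ) :
    ∃ μ, IsMinNonface Δ μ ∧ l ∈ μ ∧ k ∉ μ ∧ insert k (μ.erase l) ∈ Δ ∧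
      insert k (μ.erase l) ⊆ insert k (A.erase l) := by
  obtain ⟨μ, hsub, hμ⟩ := exists_min hst A hA
  have hlμ : l ∈ μ := by
    by_contra hl
    exact hμ.1 (hdown hst h3 ((Finset.subset_erase.mpr ⟨hsub, hl⟩).trans
      (Finset.subset_insert _ _)))
  have hce : insert k (μ.erase l) ⊆ insert k (A.erase l) :=
    Finset.insert_subset_insert _ (Finset.erase_subset_erase _ hsub)
  exact ⟨μ, hμ, hlμ, fun h => h2 (hsub h), hdown hst h3 hce, hce⟩

end Comb

section Comb2

variable {n : ℕ} {Δ : Set (Finset (Fin n))} {k l : Fin n}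

lemma star_minimal (hst : IsStableComplex Δ) (hkl : k < l) {σ T : Finset (Fin n)}
    (hσ : IsMinNonface Δ σ) (hstar : IsStar Δ k l σ T) :
    ∀ A, A ∉ Δ → Skl Δ k l A ⊆ T → Skl Δ k l A = T := by
  intro A hA hsub
  by_contra hne
  rcases hstar with ⟨σs, τ, hσs, hσsne, hd, hdisj, htail, rfl⟩ | ⟨hnd, rfl⟩
  · -- type C : T = σs ∪ τ
    obtain ⟨hlσs, hkσs, hcσs, hSkl⟩ := decomp_shift hst hσ hσs hσsne hd
    have hkσmem : k ∈ σ := by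
      rw [hd, hSkl]; exact Finset.mem_union_left _ (Finset.mem_insert_self _ _)
    have hkT : k ∉ σs ∪ τ := by
      intro hk
      rcases Finset.mem_union.mp hk with h | h
      · exact hkσs h
      · exact absurd (htail l hlσs k h) (not_lt.mpr hkl.le)
    have hTeσ : (σs ∪ τ).erase l ⊆ σ := by
      intro x hx
      obtain ⟨hxl, hxT⟩ := Finset.mem_erase.mp hx
      rw [hd, hSkl]
      rcases Finset.mem_union.mp hxT with h | h
      · exact Finset.mem_union_left _ (Finset.mem_insert_of_mem (Finset.mem_erase.mpr ⟨hxl, h⟩))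
      · exact Finset.mem_union_right _ h
    rcases Skl_cases (Δ := Δ) (k := k) (l := l) A with ⟨hcondA, hAA⟩ | ⟨a1, a2, a3, hAc⟩
    · rw [hAA] at hsub hne
      have hkA : k ∉ A := fun h => hkT (hsub h)
      by_cases hlA : l ∈ A
      · have hcA : insert k (A.erase l) ∉ Δ := fun hc => hcondA ⟨hlA, hkA, hc⟩
        have hcsubσ : insert k (A.erase l) ⊆ σ := by
          intro x hx
          rcases Finset.mem_insert.mp hx with rfl | hx
          · exact hkσmem
          · obtain ⟨hxl, hxA⟩ := Finset.mem_erase.mp hx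
            exact hTeσ (Finset.mem_erase.mpr ⟨hxl, hsub hxA⟩)
        obtain ⟨w, hwT, hwA⟩ :=
          Finset.exists_of_ssubset (Finset.ssubset_iff_subset_ne.mpr ⟨hsub, hne⟩)
        have hcne : insert k (A.erase l) ≠ σ := by
          intro h
          have hwσ : w ∈ σ := by
            rw [hd, hSkl]
            rcases Finset.mem_union.mp hwT with hw | hw
            · exact Finset.mem_union_left _ (Finset.mem_insert_of_mem
                (Finset.mem_erase.mpr ⟨fun e => hwA (e ▸ hlA), hw⟩))
            · exact Finset.mem_union_right _ hw
          rw [← h] at hwσ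
          rcases Finset.mem_insert.mp hwσ with h' | h'
          · exact hkT (h' ▸ hwT)
          · exact hwA (Finset.mem_of_mem_erase h')
        exact hcA (min_face hσ hcsubσ hcne)
      · -- l ∉ A : A ⊆ σ.erase k, a face
        have hAσ : A ⊆ σ.erase k := by
          intro x hx
          exact Finset.mem_erase.mpr ⟨fun e => hkT (e ▸ hsub hx),
            hTeσ (Finset.mem_erase.mpr ⟨fun e => hlA (e ▸ hx), hsub hx⟩)⟩
        exact hA (hdown hst (min_face hσ (Finset.erase_subset _ _)
          (fun h => (Finset.erase_eq_self.mp h) hkσmem)) hAσ)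
    · rw [hAc] at hsub
      exact hkT (hsub (Finset.mem_insert_self _ _))
  · -- second disjunct : T = Skl σ
    rcases Skl_cases (Δ := Δ) (k := k) (l := l) σ with ⟨hcondσ, hσσ⟩ | ⟨h1, h2, h3, hσc⟩
    · rw [hσσ] at hsub hne
      rcases Skl_cases (Δ := Δ) (k := k) (l := l) A with ⟨hcondA, hAA⟩ | ⟨a1, a2, a3, hAc⟩
      · rw [hAA] at hsub hne
        exact hA (min_face hσ hsub hne)
      · rw [hAc] at hsub hne
        obtain ⟨μ, hμ, m1, m2, m3, msub⟩ := shifted_sub hst hA a1 a2 a3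
        exact typeA_hard hst hkl hσ hnd hμ m1 m2 (msub.trans hsub)
          (fun h => hne (Finset.Subset.antisymm hsub (h ▸ msub)))
    · rw [hσc] at hsub hne
      rcases Skl_cases (Δ := Δ) (k := k) (l := l) A with ⟨hcondA, hAA⟩ | ⟨a1, a2, a3, hAc⟩
      · rw [hAA] at hsub
        exact hA (hdown hst h3 hsub)
      · rw [hAc] at hsub hne
        obtain ⟨μ, hμ, m1, m2, m3, msub⟩ := shifted_sub hst hA a1 a2 a3
        have hcμsub : insert k (μ.erase l) ⊆ insert k (σ.erase l) := msub.trans hsub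
        have hμσ : μ ⊆ σ := by
          intro x hx
          by_cases hxl : x = l
          · exact hxl ▸ h1
          · have hx' : x ∈ insert k (σ.erase l) :=
              hcμsub (Finset.mem_insert_of_mem (Finset.mem_erase.mpr ⟨hxl, hx⟩))
            rcases Finset.mem_insert.mp hx' with rfl | h
            · exact absurd hx m2
            · exact Finset.mem_of_mem_erase h
        have hμne : μ ≠ σ := by
          rintro rfl
          exact hne (Finset.Subset.antisymm hsub msub)
        exact hμ.1 (min_face hσ hμσ hμne)

lemma minF_star (hst : IsStableComplex Δ) (hkl : k < l) {T : Finset (Fin n)}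
    (h1 : ∃ A, A ∉ Δ ∧ Skl Δ k l A ⊆ T)
    (h2 : ∀ T', T' ⊆ T → (∃ A, A ∉ Δ ∧ Skl Δ k l A ⊆ T') → T' = T) :
    ∃ σ, IsMinNonface Δ σ ∧ IsStar Δ k l σ T := by
  obtain ⟨A, hA, hAT⟩ := h1
  have hTA : Skl Δ k l A = T := h2 _ hAT ⟨A, hA, Finset.Subset.refl _⟩
  rcases Skl_cases (Δ := Δ) (k := k) (l := l) A with ⟨hcondA, hAA⟩ | ⟨a1, a2, a3, hAc⟩
  · -- T = A
    rw [hAA] at hTA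
    subst hTA
    obtain ⟨μ, hμsub, hμ⟩ := exists_min hst A hA
    by_cases hdec : ∃ σs τ' : Finset (Fin n), IsMinNonface Δ σs ∧ σs ≠ μ ∧
        μ = Skl Δ k l σs ∪ τ' ∧ Disjoint (Skl Δ k l σs) τ' ∧ ∀ a ∈ σs, ∀ b ∈ τ', a < b
    · obtain ⟨σs, τ', c1, c2, c3, c4, c5⟩ := hdec
      obtain ⟨d1, d2, d3, d4⟩ := decomp_shift hst hμ c1 c2 c3
      have hsub' : Skl Δ k l σs ⊆ A := by
        refine Finset.Subset.trans ?_ hμsub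
        rw [c3]
        exact Finset.subset_union_left
      have heq : Skl Δ k l σs = A := h2 _ hsub' ⟨σs, c1.1, Finset.Subset.refl _⟩
      refine ⟨σs, c1, Or.inr ⟨?_, heq.symm⟩⟩
      intro h
      exact d2 (decomp_k_mem hst c1 h)
    · by_cases hsh : l ∈ μ ∧ k ∉ μ ∧ insert k (μ.erase l) ∈ Δ
      · obtain ⟨s1, s2, s3⟩ := hsh
        by_cases hkA : k ∈ A
        · have hcsub : insert k (μ.erase l) ⊆ A := by
            intro x hx
            rcases Finset.mem_insert.mp hx with rfl | hx
            · exact hkA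
            · exact hμsub (Finset.mem_of_mem_erase hx)
          have heq : insert k (μ.erase l) = A :=
            h2 _ hcsub ⟨μ, hμ.1, by rw [Skl_pos s1 s2 s3]⟩
          refine ⟨μ, hμ, Or.inr ⟨hdec, ?_⟩⟩
          rw [Skl_pos s1 s2 s3]
          exact heq.symm
        · -- PROBLEM CASE
          have hlA : l ∈ A := hμsub s1
          have hcA : insert k (A.erase l) ∉ Δ := fun hc => hcondA ⟨hlA, hkA, hc⟩
          have hβ : ∀ C, C ⊆ A → C ≠ A → C ∉ Δ →
              (l ∈ C ∧ k ∉ C ∧ insert k (C.erase l) ∈ Δ) := by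
            intro C hCsub hCne hC
            rcases Skl_cases (Δ := Δ) (k := k) (l := l) C with ⟨hcond, hCC⟩ | ⟨c1, c2, c3, _⟩
            · exact absurd (h2 C hCsub ⟨C, hC, by rw [hCC]⟩) hCne
            · exact ⟨c1, c2, c3⟩
          have hAnm : ¬ IsMinNonface Δ A := by
            intro hAm
            have hμA : μ = A := by
              by_contra hne'
              exact hμ.1 (min_face hAm hμsub hne')
            exact hcA (hμA ▸ s3)
          obtain ⟨σs, ⟨hσsmin, hσssub⟩, hminm⟩ := exists_min_measure
            (fun ν => IsMinNonface Δ ν ∧ ν ⊆ A) ⟨μ, hμ, hμsub⟩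
          obtain ⟨mh, hmhσs, hallσs, hmhmsr⟩ :=
            exists_top (nonempty_of_nonface hst hσsmin.1 k)
          have hlow : ∀ x ∈ A, x ≤ mh → x ∈ σs := by
            intro x hxA hxm
            by_contra hxσs
            have hxlt : x < mh := lt_of_le_of_ne hxm (fun e => hxσs (e ▸ hmhσs))
            have hσs1 : insert x (σs.erase mh) ∉ Δ :=
              hst.2 _ hσsmin.1 mh x hmhσs hallσs hxlt hxσs
            obtain ⟨ν2, hν2sub, hν2⟩ := exists_min hst _ hσs1
            have hν2A : ν2 ⊆ A := by
              refine hν2sub.trans ?_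
              intro y hy
              rcases Finset.mem_insert.mp hy with rfl | hy
              · exact hxA
              · exact hσssub (Finset.mem_of_mem_erase hy)
            have hge : msr σs ≤ msr ν2 := hminm ν2 ⟨hν2, hν2A⟩
            have hpos : (0 : ℕ) < (mh : ℕ) := lt_of_le_of_lt (Nat.zero_le _) hxlt
            have hlt : msr ν2 < msr σs := by
              have hA1 : msr ν2 ≤ msr (insert x (σs.erase mh)) := msr_mono hν2sub
              have hA2 : msr (insert x (σs.erase mh)) < (mh : ℕ) := by
                apply (Finset.sup_lt_iff hpos).mpr
                intro y hy
                rcases Finset.mem_insert.mp hy with rfl | hy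
                · exact hxlt
                · obtain ⟨hym, hyσs⟩ := Finset.mem_erase.mp hy
                  exact lt_of_le_of_ne (hallσs y hyσs) (fun e => hym (Fin.ext e))
              omega
            omega
          have hσsneA : σs ≠ A := fun e => hAnm (e ▸ hσsmin)
          obtain ⟨hlσs, hkσs, hcσsΔ⟩ := hβ σs hσssub hσsneA hσsmin.1
          have hπmin : IsMinNonface Δ (insert k (A.erase l)) := by
            refine ⟨hcA, ?_⟩
            have herase : ∀ y ∈ insert k (A.erase l), (insert k (A.erase l)).erase y ∈ Δ := by
              intro y hy
              by_cases hyk : y = k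
              · rw [hyk]
                have hek : (insert k (A.erase l)).erase k = A.erase l :=
                  Finset.erase_insert (fun h => hkA (Finset.mem_of_mem_erase h))
                rw [hek]
                by_contra hcon
                exact (Finset.notMem_erase l A)
                  (hβ _ (Finset.erase_subset _ _)
                    (fun e => (Finset.erase_eq_self.mp e) hlA) hcon).1
              · have hyA : y ∈ A.erase l := by
                  rcases Finset.mem_insert.mp hy with h | h
                  · exact absurd h hyk
                  · exact h
                obtain ⟨hyl, hyAA⟩ := Finset.mem_erase.mp hyA
                by_contra hyn
                obtain ⟨ρ, hρsub, hρ⟩ := exists_min hst _ hyn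
                have hρπ : ∀ x ∈ ρ, x ≠ y ∧ (x = k ∨ (x ≠ l ∧ x ∈ A)) := by
                  intro x hx
                  have hx' := hρsub hx
                  obtain ⟨hxy, hxπ⟩ := Finset.mem_erase.mp hx'
                  refine ⟨hxy, ?_⟩
                  rcases Finset.mem_insert.mp hxπ with h | h
                  · exact Or.inl h
                  · exact Or.inr ⟨(Finset.mem_erase.mp h).1, (Finset.mem_erase.mp h).2⟩
                have hkρ : k ∈ ρ := by
                  by_contra hkρ
                  have hρA : ρ ⊆ (A.erase l).erase y := by
                    intro x hx
                    obtain ⟨hxy, hxd⟩ := hρπ x hx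
                    rcases hxd with rfl | ⟨hxl, hxA⟩
                    · exact absurd hx hkρ
                    · exact Finset.mem_erase.mpr ⟨hxy, Finset.mem_erase.mpr ⟨hxl, hxA⟩⟩
                  have hρA' : ρ ⊆ A :=
                    hρA.trans ((Finset.erase_subset _ _).trans (Finset.erase_subset _ _))
                  have hlρ : l ∉ ρ := fun h =>
                    (Finset.notMem_erase l A) (Finset.mem_of_mem_erase (hρA h))
                  have hρne : ρ ≠ A := fun e => hlρ (e ▸ hlA)
                  exact hlρ (hβ ρ hρA' hρne hρ.1).1
                have hlρ : l ∉ ρ := by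
                  intro h
                  rcases (hρπ l h).2 with h' | h'
                  · exact (ne_of_lt hkl) h'.symm
                  · exact h'.1 rfl
                have hyρ : y ∉ ρ := fun h => (hρπ y h).1 rfl
                set ν := σs ∪ ρ.erase k with hνdef
                have hνA : ν ⊆ A := by
                  intro x hx
                  rcases Finset.mem_union.mp hx with h | h
                  · exact hσssub h
                  · obtain ⟨hxk, hxρ⟩ := Finset.mem_erase.mp h
                    rcases (hρπ x hxρ).2 with h' | h'
                    · exact absurd h' hxk
                    · exact h'.2
                have hνn : ν ∉ Δ := hup hst hσsmin.1 Finset.subset_union_left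
                by_cases hνA' : ν = A
                · obtain ⟨M, hMA, hallA, _⟩ := exists_top (nonempty_of_nonface hst hA k)
                  have hMσs : M ∉ σs := by
                    intro hMσs
                    apply hσsneA
                    apply Finset.Subset.antisymm hσssub
                    intro x hxA
                    exact hlow x hxA ((hallA x hxA).trans (hallσs M hMσs))
                  have hMρ : M ∈ ρ := by
                    have hMν : M ∈ ν := hνA' ▸ hMA
                    rcases Finset.mem_union.mp hMν with h | h
                    · exact absurd h hMσs
                    · exact Finset.mem_of_mem_erase h
                  have hallρ : ∀ j ∈ ρ, j ≤ M := by
                    intro j hj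
                    rcases (hρπ j hj).2 with h' | h'
                    · exact h' ▸ (hkl.trans_le (hallA l hlA)).le
                    · exact hallA j h'.2
                  have hyρ' : y ∉ ρ := hyρ
                  have hyM : y < M := lt_of_le_of_ne (hallA y hyAA)
                    (fun e => hyρ (e ▸ hMρ))
                  have hρ1 : insert y (ρ.erase M) ∉ Δ :=
                    hst.2 ρ hρ.1 M y hMρ hallρ hyM hyρ
                  set ν1 := σs ∪ (insert y (ρ.erase M)).erase k with hν1def
                  have hν1A : ν1 ⊆ A := by
                    intro x hx
                    rcases Finset.mem_union.mp hx with h | h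
                    · exact hσssub h
                    · obtain ⟨hxk, hxi⟩ := Finset.mem_erase.mp h
                      rcases Finset.mem_insert.mp hxi with rfl | h'
                      · exact hyAA
                      · obtain ⟨hxM, hxρ⟩ := Finset.mem_erase.mp h'
                        rcases (hρπ x hxρ).2 with h'' | h''
                        · exact absurd h'' hxk
                        · exact h''.2
                  have hν1ne : ν1 ≠ A := by
                    intro e
                    have hMν1 : M ∈ ν1 := e ▸ hMA
                    rcases Finset.mem_union.mp hMν1 with h | h
                    · exact hMσs h
                    · obtain ⟨_, hxi⟩ := Finset.mem_erase.mp h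
                      rcases Finset.mem_insert.mp hxi with h' | h'
                      · exact (ne_of_lt hyM) h'.symm
                      · exact (Finset.notMem_erase M ρ) h'
                  have hν1n : ν1 ∉ Δ := hup hst hσsmin.1 Finset.subset_union_left
                  obtain ⟨hlν1, _, hcν1⟩ := hβ ν1 hν1A hν1ne hν1n
                  apply hρ1
                  apply hdown hst hcν1
                  intro x hx
                  by_cases hxk : x = k
                  · exact Finset.mem_insert.mpr (Or.inl hxk)
                  · refine Finset.mem_insert_of_mem (Finset.mem_erase.mpr ⟨?_, ?_⟩)
                    · intro e
                      subst e
                      rcases Finset.mem_insert.mp hx with h' | h'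
                      · exact hyl h'.symm
                      · exact hlρ (Finset.mem_of_mem_erase h')
                    · exact Finset.mem_union_right _ (Finset.mem_erase.mpr ⟨hxk, hx⟩)
                · obtain ⟨hlν, _, hcν⟩ := hβ ν hνA hνA' hνn
                  apply hρ.1
                  apply hdown hst hcν
                  intro x hx
                  by_cases hxk : x = k
                  · exact Finset.mem_insert.mpr (Or.inl hxk)
                  · exact Finset.mem_insert_of_mem (Finset.mem_erase.mpr
                      ⟨fun e => hlρ (e ▸ hx),
                        Finset.mem_union_right _ (Finset.mem_erase.mpr ⟨hxk, hx⟩)⟩)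
            intro ρ' hρ'
            obtain ⟨y, hyπ, hyρ'⟩ := Finset.exists_of_ssubset hρ'
            exact hdown hst (herase y hyπ) (Finset.subset_erase.mpr ⟨hρ'.subset, hyρ'⟩)
          refine ⟨insert k (A.erase l), hπmin,
            Or.inl ⟨σs, A \ σs, hσsmin, ?_, ?_, ?_, ?_, ?_⟩⟩
          · intro e
            have hlπ : l ∈ insert k (A.erase l) := e ▸ hlσs
            rcases Finset.mem_insert.mp hlπ with h | h
            · exact (ne_of_lt hkl) h.symm
            · exact (Finset.notMem_erase l A) h
          · rw [Skl_pos hlσs hkσs hcσsΔ]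
            ext x
            simp only [Finset.mem_insert, Finset.mem_union, Finset.mem_erase, Finset.mem_sdiff]
            constructor
            · rintro (rfl | ⟨hxl, hxA⟩)
              · exact Or.inl (Or.inl rfl)
              · by_cases hxσs : x ∈ σs
                · exact Or.inl (Or.inr ⟨hxl, hxσs⟩)
                · exact Or.inr ⟨hxA, hxσs⟩
            · rintro ((rfl | ⟨hxl, hxσs⟩) | ⟨hxA, hxσs⟩)
              · exact Or.inl rfl
              · exact Or.inr ⟨hxl, hσssub hxσs⟩
              · exact Or.inr ⟨fun e => hxσs (e ▸ hlσs), hxA⟩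
          · rw [Skl_pos hlσs hkσs hcσsΔ]
            rw [Finset.disjoint_left]
            intro a ha ha'
            obtain ⟨haA, haσs⟩ := Finset.mem_sdiff.mp ha'
            rcases Finset.mem_insert.mp ha with rfl | h
            · exact hkA haA
            · exact haσs (Finset.mem_of_mem_erase h)
          · intro a ha b hb
            obtain ⟨hbA, hbσs⟩ := Finset.mem_sdiff.mp hb
            have hmb : ¬ b ≤ mh := fun h => hbσs (hlow b hbA h)
            exact lt_of_le_of_lt (hallσs a ha) (not_le.mp hmb)
          · exact (Finset.union_sdiff_of_subset hσssub).symm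
      · have heq : μ = A := h2 _ hμsub ⟨μ, hμ.1, by rw [Skl_neg hsh]⟩
        refine ⟨μ, hμ, Or.inr ⟨hdec, ?_⟩⟩
        rw [Skl_neg hsh]
        exact heq.symm
  · -- T = insert k (A.erase l)
    obtain ⟨μ, hμ, m1, m2, m3, msub⟩ := shifted_sub hst hA a1 a2 a3
    rw [hAc] at hTA
    have heq : insert k (μ.erase l) = T :=
      h2 _ (hTA ▸ msub) ⟨μ, hμ.1, by rw [Skl_pos m1 m2 m3]⟩
    refine ⟨μ, hμ, Or.inr ⟨?_, ?_⟩⟩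
    · intro h
      exact m2 (decomp_k_mem hst hμ h)
    · rw [Skl_pos m1 m2 m3]
      exact heq.symm

lemma max_eq_of {s : Finset (Fin n)} {b : Fin n} (hb : b ∈ s) (hall : ∀ x ∈ s, x ≤ b) :
    s.max = (b : WithBot (Fin n)) :=
  le_antisymm (Finset.max_le (fun x hx => by exact_mod_cast hall x hx)) (Finset.le_max hb)

lemma star_max (hst : IsStableComplex Δ) (hkl : k < l) {σ T : Finset (Fin n)}
    (hσ : IsMinNonface Δ σ) (hstar : IsStar Δ k l σ T) : T.max = σ.max := by
  rcases hstar with ⟨σs, τ, hσs, hne, hd, hdisj, htail, rfl⟩ | ⟨hnd, rfl⟩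
  · obtain ⟨hlσs, hkσs, hcσs, hSkl⟩ := decomp_shift hst hσ hσs hne hd
    have hτne : τ.Nonempty := by
      rcases τ.eq_empty_or_nonempty with rfl | h
      · exfalso
        apply hσ.1
        rw [hd, hSkl, Finset.union_empty]
        exact hcσs
      · exact h
    obtain ⟨b0, hb0τ, hb0all, _⟩ := exists_top hτne
    have h1 : (σs ∪ τ).max = (b0 : WithBot (Fin n)) := by
      apply max_eq_of (Finset.mem_union_right _ hb0τ)
      intro x hx
      rcases Finset.mem_union.mp hx with h | h
      · exact (htail x h b0 hb0τ).le
      · exact hb0all x h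
    have h2 : σ.max = (b0 : WithBot (Fin n)) := by
      apply max_eq_of
      · rw [hd, hSkl]; exact Finset.mem_union_right _ hb0τ
      · intro x hx
        rw [hd, hSkl] at hx
        rcases Finset.mem_union.mp hx with h | h
        · rcases Finset.mem_insert.mp h with rfl | h'
          · exact (hkl.trans (htail l hlσs b0 hb0τ)).le
          · exact (htail x (Finset.mem_of_mem_erase h') b0 hb0τ).le
        · exact hb0all x h
    rw [h1, h2]
  · rcases Skl_cases (Δ := Δ) (k := k) (l := l) σ with ⟨_, h⟩ | ⟨h1, h2, h3, h⟩
    · rw [h]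
    · rw [h]
      obtain ⟨m, hm, hlm⟩ := shift_big hst hkl hσ.1 h1 h2 h3
      obtain ⟨Mσ, hMσ, hallσ, _⟩ := exists_top (⟨l, h1⟩ : σ.Nonempty)
      have hMl : Mσ ≠ l := fun e => absurd (hallσ m hm) (not_le.mpr (e ▸ hlm))
      rw [max_eq_of (s := insert k (σ.erase l)) (b := Mσ)
        (Finset.mem_insert_of_mem (Finset.mem_erase.mpr ⟨hMl, hMσ⟩)) ?_, max_eq_of hMσ hallσ]
      intro x hx
      rcases Finset.mem_insert.mp hx with rfl | hx
      · exact (hkl.trans (hlm.trans_le (hallσ m hm))).le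
      · exact hallσ x (Finset.mem_of_mem_erase hx)

lemma not_shift_iff {T : Finset (Fin n)} :
    T ∉ ShiftKl Δ k l ↔ ∃ A, A ∉ Δ ∧ Skl Δ k l A ⊆ T := by
  unfold ShiftKl
  rw [Set.mem_setOf_eq]
  exact not_not

end Comb2

end StarAux

/-- If `Δ` is stable with minimal nonfaces `σ_1,…,σ_r` (so
`G(I_Δ) = {x_{σ_1},…,x_{σ_r}}`), then `G(I_{Shift_{kl}(Δ)}) = {x_{σ_1^*},…,x_{σ_r^*}}`
and `m(σ_i^*) = m(σ_i)` for all `i`. -/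
theorem minGens_shiftKl (n : ℕ) (K : Type) [Field K] [Infinite K]
    (Δ : Set (Finset (Fin n))) (hst : IsStableComplex Δ) (k l : Fin n) (hkl : k < l) :
    minGens K (srIdeal K (ShiftKl Δ k l)) =
      { u | ∃ σ σstar : Finset (Fin n), IsMinNonface Δ σ ∧ IsStar Δ k l σ σstar ∧
        u = ∏ i ∈ σstar, X i } ∧
    ∀ σ σstar : Finset (Fin n), IsMinNonface Δ σ → IsStar Δ k l σ σstar →
      σstar.max = σ.max := by
  constructor
  · rw [StarAux.minGens_char K (ShiftKl Δ k l)]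
    ext u
    simp only [Set.mem_setOf_eq]
    constructor
    · rintro ⟨T, hT, hmin, rfl⟩
      have hF := StarAux.not_shift_iff.mp hT
      have hmin' : ∀ T', T' ⊆ T → (∃ A, A ∉ Δ ∧ Skl Δ k l A ⊆ T') → T' = T :=
        fun T' hsub h => hmin T' hsub (StarAux.not_shift_iff.mpr h)
      obtain ⟨σ, hσ, hstar⟩ := StarAux.minF_star hst hkl hF hmin'
      exact ⟨σ, T, hσ, hstar, (StarAux.prod_X_eq K T).symm⟩
    · rintro ⟨σ, T, hσ, hstar, rfl⟩
      refine ⟨T, StarAux.not_shift_iff.mpr (StarAux.star_mem_F hst hkl hσ hstar), ?_,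
        StarAux.prod_X_eq K T⟩
      intro T' hsub hT'
      obtain ⟨A, hA, hAT'⟩ := StarAux.not_shift_iff.mp hT'
      have hEq := StarAux.star_minimal hst hkl hσ hstar A hA (hAT'.trans hsub)
      exact Finset.Subset.antisymm hsub (hEq ▸ hAT')
  · intro σ σstar hh1 hh2
    exact StarAux.star_max hst hkl hh1 hh2
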